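/- arXiv:2503.01093 — 4 statements merged into one kernel-verified Lean document; each statement's English description precedes it below -/
import Mathlib

section
/- Let κ_i < κ_j be real numbers and a > 0. Define τ(x,y,t) = E_i(x,y,t) + a·E_j(x,y,t). Then for all (x,y,t) ∈ ℝ³, 2·∂²/∂x² ( ln τ(x,y,t) ) = (1/2)(κ_j−κ_i)² · sech²( ((κ_j−κ_i)/2) · ( x + (κ_i+κ_j) y − (κ_i²+κ_iκ_j+κ_j²) t + x_0 ) ), where x_0 = (ln a)/(κ_j−κ_i). -/
/-- The hyperbolic secant. -/
noncomputable def sech (z : ℝ) : ℝ := 1 / Real.cosh z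

/-- The exponential `E_k(x,y,t) = exp(κ x + κ² y − κ³ t)`. -/
noncomputable def Ek (κ : ℝ) (x y t : ℝ) : ℝ :=
  Real.exp (κ * x + κ ^ 2 * y - κ ^ 3 * t)

lemma hasDerivAt_Ek (κ y t x : ℝ) :
    HasDerivAt (fun x => Ek κ x y t) (κ * Ek κ x y t) x := by
  unfold Ek
  have h : HasDerivAt (fun x : ℝ => κ * x + κ ^ 2 * y - κ ^ 3 * t) κ x := by
    simpa using (((hasDerivAt_id x).const_mul κ).add_const (κ ^ 2 * y)).sub_const (κ ^ 3 * t)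
  simpa [mul_comm] using h.exp

/-- For `τ = E_i + a E_j` with `κ_i < κ_j` and `a > 0`, the function
`u = 2 (ln τ)_xx` is the `[i,j]` line-soliton with phase `x₀ = (ln a)/(κ_j − κ_i)`. -/
theorem tau_gives_line_soliton (κi κj a : ℝ) (h : κi < κj) (ha : 0 < a) :
    ∀ x y t : ℝ,
      2 * deriv (fun x₁ : ℝ => deriv (fun x₂ : ℝ =>
            Real.log (Ek κi x₂ y t + a * Ek κj x₂ y t)) x₁) x
      = (1 / 2) * (κj - κi) ^ 2 *
          (sech (((κj - κi) / 2) *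
            (x + (κi + κj) * y - (κi ^ 2 + κi * κj + κj ^ 2) * t
              + Real.log a / (κj - κi)))) ^ 2 := by
  intro x y t
  have hd : (0:ℝ) < κj - κi := sub_pos.2 h
  have hEpos : ∀ κ z, 0 < Ek κ z y t := fun κ z => Real.exp_pos _
  have hpos : ∀ z : ℝ, 0 < Ek κi z y t + a * Ek κj z y t :=
    fun z => add_pos (hEpos _ _) (mul_pos ha (hEpos _ _))
  have hF : ∀ z : ℝ, HasDerivAt (fun x => Ek κi x y t + a * Ek κj x y t)
      (κi * Ek κi z y t + a * (κj * Ek κj z y t)) z :=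
    fun z => (hasDerivAt_Ek κi y t z).add ((hasDerivAt_Ek κj y t z).const_mul a)
  have hlog : (fun x₁ : ℝ => deriv (fun x₂ : ℝ =>
        Real.log (Ek κi x₂ y t + a * Ek κj x₂ y t)) x₁)
      = fun z => (κi * Ek κi z y t + a * (κj * Ek κj z y t)) /
          (Ek κi z y t + a * Ek κj z y t) := by
    funext z
    exact ((hF z).log (hpos z).ne').deriv
  rw [hlog]
  have hnum : HasDerivAt (fun z => κi * Ek κi z y t + a * (κj * Ek κj z y t))
      (κi * (κi * Ek κi x y t) + a * (κj * (κj * Ek κj x y t))) x :=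
    ((hasDerivAt_Ek κi y t x).const_mul κi).add
      (((hasDerivAt_Ek κj y t x).const_mul κj).const_mul a)
  have h2 : deriv (fun z => (κi * Ek κi z y t + a * (κj * Ek κj z y t)) /
      (Ek κi z y t + a * Ek κj z y t)) x = _ := (hnum.div (hF x) (hpos x).ne').deriv
  rw [h2]
  -- now the algebraic identity
  set Ei := Ek κi x y t with hEi
  set Ej := Ek κj x y t with hEj
  set z := ((κj - κi) / 2) *
      (x + (κi + κj) * y - (κi ^ 2 + κi * κj + κj ^ 2) * t + Real.log a / (κj - κi)) with hz
  have h2z : 2 * z = (κj * x + κj ^ 2 * y - κj ^ 3 * t)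
      - (κi * x + κi ^ 2 * y - κi ^ 3 * t) + Real.log a := by
    rw [hz]; field_simp; ring
  have hexp : Real.exp z ^ 2 * Ei = a * Ej := by
    have : Real.exp z ^ 2 = Real.exp (2 * z) := by
      rw [← Real.exp_nat_mul]; norm_num [mul_comm]
    rw [this, h2z, hEi, hEj, Ek, Ek, Real.exp_add, Real.exp_sub, Real.exp_log ha]
    field_simp
  have he : Real.exp z ≠ 0 := (Real.exp_pos z).ne'
  have hEine : Ei ≠ 0 := (hEpos κi x).ne'
  have hs : Ei + a * Ej ≠ 0 := (hpos x).ne'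
  have hsech : sech z ^ 2 = 4 * (a * Ej) * Ei / (Ei + a * Ej) ^ 2 := by
    rw [sech, Real.cosh_eq, Real.exp_neg, ← hexp]
    generalize hg : Real.exp z = e
    have he0 : (0:ℝ) < e := hg ▸ Real.exp_pos z
    have hene : e ≠ 0 := he0.ne'
    have hc : e + e⁻¹ ≠ 0 := by positivity
    have hEipos : (0:ℝ) < Ei := hEpos κi x
    have hs2 : Ei + e ^ 2 * Ei ≠ 0 :=
      (add_pos hEipos (mul_pos (pow_pos he0 2) hEipos)).ne'
    field_simp
    ring
  rw [hsech]
  field_simp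
  ring
end

section
/- Let c ∈ ℝ and let f : ℝ → ℝ be continuous and monotonically nondecreasing. Then for every T ≥ 0 and every Y ∈ ℝ there exists a unique real number κ such that κ = f( Y − (2κ + c) T ). (In particular, the hodograph formula κ(Y,T) = f(Y − (2κ(Y,T)+c)T) defines a function on all of ℝ × [0,∞), i.e. the initial value problem with monotonically increasing initial data admits a globally defined hodograph solution.) -/
/-!
For `T ≥ 0` the right-hand side `κ ↦ f (Y - (2κ + c)T)` is a continuous antitone function of `κ`,
because a monotone `f` is composed with a nonincreasing affine map. A continuous antitone
self-map of a connected linear order crosses the diagonal exactly once: it lies above the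
diagonal at `min p (g p)` and below it at `max p (g p)`, and two fixed points `x ≤ y` would give
`y = g y ≤ g x = x`.
-/

section FixedPoint

variable {α : Type*} [LinearOrder α] {g : α → α}

theorem Antitone.eq_of_isFixedPt (hg : Antitone g) {x y : α} (hx : Function.IsFixedPt g x)
    (hy : Function.IsFixedPt g y) : x = y := by
  rcases le_total x y with hxy | hyx
  · exact le_antisymm hxy (hy ▸ hx ▸ hg hxy)
  · exact le_antisymm (hx ▸ hy ▸ hg hyx) hyx

theorem Antitone.exists_isFixedPt [TopologicalSpace α] [OrderClosedTopology α]
    [PreconnectedSpace α] [Nonempty α] (hg : Antitone g) (hgc : Continuous g) :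
    ∃ x, Function.IsFixedPt g x := by
  obtain ⟨p⟩ := ‹Nonempty α›
  have h_above : min p (g p) ≤ g (min p (g p)) := (min_le_right _ _).trans (hg (min_le_left _ _))
  have h_below : g (max p (g p)) ≤ max p (g p) := (hg (le_max_left _ _)).trans (le_max_right _ _)
  obtain ⟨x, hx⟩ := intermediate_value_univ₂ continuous_id hgc h_above h_below
  exact ⟨x, hx.symm⟩

theorem Antitone.existsUnique_isFixedPt [TopologicalSpace α] [OrderClosedTopology α]
    [PreconnectedSpace α] [Nonempty α] (hg : Antitone g) (hgc : Continuous g) :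
    ∃! x, Function.IsFixedPt g x :=
  let ⟨x, hx⟩ := hg.exists_isFixedPt hgc
  ⟨x, hx, fun _ hy => hg.eq_of_isFixedPt hy hx⟩

end FixedPoint

/-- For continuous monotonically nondecreasing initial data `f`, the hodograph
relation `κ = f(Y − (2κ+c)T)` has a unique solution `κ` for every `T ≥ 0` and
every `Y`; i.e. the hodograph formula defines a global solution. -/
theorem hodograph_global_existence_uniqueness (c : ℝ) (f : ℝ → ℝ)
    (hfc : Continuous f) (hfm : Monotone f) :
    ∀ T : ℝ, 0 ≤ T → ∀ Y : ℝ, ∃! κ : ℝ, κ = f (Y - (2 * κ + c) * T) := by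
  intro T hT Y
  have h_foot : Antitone fun κ : ℝ => Y - (2 * κ + c) * T := fun _ _ h => by
    dsimp only
    gcongr
  have h_anti : Antitone fun κ => f (Y - (2 * κ + c) * T) := hfm.comp_antitone h_foot
  have h_cont : Continuous fun κ => f (Y - (2 * κ + c) * T) := by fun_prop
  obtain ⟨κ, hκ, h_uniq⟩ := h_anti.existsUnique_isFixedPt h_cont
  exact ⟨κ, hκ.symm, fun y hy => h_uniq y hy.symm⟩
end

section
/- Let κ_1^0 < κ_2^0 be real numbers, T > 0, and let κ_2(·,T) be the rarefaction solution: κ_2(η,T) = κ_1^0 for η ≤ Y_b(T) = 3κ_1^0 T, κ_2(η,T) = (η − κ_1^0 T)/(2T) for Y_b(T) ≤ η ≤ Y_a(T) = (κ_1^0 + 2κ_2^0) T, and κ_2(η,T) = κ_2^0 for η ≥ Y_a(T). Set X_a(T) = −(κ_1^0 + κ_2^0) Y_a(T) + ((κ_1^0)² + κ_1^0κ_2^0 + (κ_2^0)²) T. Then for every Y with Y_b(T) ≤ Y ≤ Y_a(T), the peak trajectory X(Y,T) = ∫_Y^{Y_a(T)} ( κ_1^0 + κ_2(η,T) ) dη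 + X_a(T) equals the parabola X(Y,T) = −(1/(4T)) ( Y + κ_1^0 T )² + (κ_1^0)² T. -/
/-- The rarefaction-wave solution `κ₂(·,T)`. -/
noncomputable def rarefaction (k1 k2 : ℝ) (Y T : ℝ) : ℝ :=
  if Y ≤ 3 * k1 * T then k1
  else if Y ≤ (k1 + 2 * k2) * T then (Y - k1 * T) / (2 * T)
  else k2

/-! On the fan `Y_b ≤ η ≤ Y_a` the slope `κ₁⁰ + κ₂(η,T)` is the affine function
`(η + κ₁⁰T)/(2T)`, so `X(·,T)` is a parabola in `Y + κ₁⁰T`. The constant is fixed at `Y_a`,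
where `Y_a + κ₁⁰T = 2(κ₁⁰ + κ₂⁰)T`; matching with `X_a` leaves exactly `(κ₁⁰)²T`. -/

lemma add_rarefaction_of_mem_fan {k1 k2 T η : ℝ} (hT : T ≠ 0)
    (hb : 3 * k1 * T ≤ η) (ha : η ≤ (k1 + 2 * k2) * T) :
    k1 + rarefaction k1 k2 η T = (η + k1 * T) / (2 * T) := by
  unfold rarefaction
  split_ifs with hη
  · -- the left edge of the fan, where both branches agree
    rw [le_antisymm hη hb]
    field_simp
    ring
  · field_simp
    ring

lemma intervalIntegral.integral_add_const_div (a b c d : ℝ) :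
    ∫ x in a..b, (x + c) / d = ((b + c) ^ 2 - (a + c) ^ 2) / (2 * d) := by
  rw [intervalIntegral.integral_div, intervalIntegral.integral_comp_add_right (fun x => x),
    integral_id]
  ring

theorem peak_trajectory_is_parabola_general (k1 k2 T : ℝ) (hT : 0 < T)
    (Y : ℝ) (hYb : 3 * k1 * T ≤ Y) (hYa : Y ≤ (k1 + 2 * k2) * T) :
    (∫ η in Y..((k1 + 2 * k2) * T), (k1 + rarefaction k1 k2 η T))
      + (-(k1 + k2) * ((k1 + 2 * k2) * T)
          + (k1 ^ 2 + k1 * k2 + k2 ^ 2) * T)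
    = -(1 / (4 * T)) * (Y + k1 * T) ^ 2 + k1 ^ 2 * T := by
  have hfan : Set.EqOn (fun η => k1 + rarefaction k1 k2 η T)
      (fun η => (η + k1 * T) / (2 * T)) (Set.uIcc Y ((k1 + 2 * k2) * T)) := by
    intro η hη
    rw [Set.uIcc_of_le hYa] at hη
    exact add_rarefaction_of_mem_fan hT.ne' (hYb.trans hη.1) hη.2
  rw [intervalIntegral.integral_congr hfan, intervalIntegral.integral_add_const_div]
  field_simp
  ring

/-- The peak trajectory `X(Y,T) = ∫_Y^{Y_a} (κ₁⁰ + κ₂(η,T)) dη + X_a(T)` of the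
modulated soliton over the rarefaction fan is the parabola
`X = −(1/(4T))(Y + κ₁⁰T)² + (κ₁⁰)²T` (a parabolic-soliton). -/
theorem peak_trajectory_is_parabola (k1 k2 T : ℝ) (h : k1 < k2) (hT : 0 < T)
    (Y : ℝ) (hYb : 3 * k1 * T ≤ Y) (hYa : Y ≤ (k1 + 2 * k2) * T) :
    (∫ η in Y..((k1 + 2 * k2) * T), (k1 + rarefaction k1 k2 η T))
      + (-(k1 + k2) * ((k1 + 2 * k2) * T)
          + (k1 ^ 2 + k1 * k2 + k2 ^ 2) * T)
    = -(1 / (4 * T)) * (Y + k1 * T) ^ 2 + k1 ^ 2 * T :=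
  peak_trajectory_is_parabola_general k1 k2 T hT Y hYb hYa
end

section
/- Let U ⊆ ℝ² be open and let κ_1, κ_2 : U → ℝ be differentiable functions of (Y,T) satisfying the κ-system ∂_T κ_1 + (2κ_1+κ_2) ∂_Y κ_1 = 0 and ∂_T κ_2 + (κ_1+2κ_2) ∂_Y κ_2 = 0 at every point of U. Then at every point of U the following two conservation laws hold: (i) ∂_T (κ_1 + κ_2) + ∂_Y ( κ_1² + κ_1κ_2 + κ_2² ) = 0 (conservation of wave numbers), and (ii) ∂_T ( (κ_2 − κ_1)³ ) + (3/2) ∂_Y ( (κ_1 + κ_2)(κ_2 − κ_1)³ ) = 0. -/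
/-- Differentiable solutions of the κ-system satisfy the conservation of wave
numbers `∂_T(κ₁+κ₂) + ∂_Y(κ₁²+κ₁κ₂+κ₂²) = 0` and the higher conservation law
`∂_T((κ₂−κ₁)³) + (3/2)∂_Y((κ₁+κ₂)(κ₂−κ₁)³) = 0`. -/
theorem kappa_system_conservation_laws (U : Set (ℝ × ℝ)) (hU : IsOpen U)
    (κ1 κ2 : ℝ → ℝ → ℝ)
    (h1d : ∀ p ∈ U, DifferentiableAt ℝ (fun q : ℝ × ℝ => κ1 q.1 q.2) p)
    (h2d : ∀ p ∈ U, DifferentiableAt ℝ (fun q : ℝ × ℝ => κ2 q.1 q.2) p)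
    (hsys1 : ∀ p ∈ U, deriv (fun T : ℝ => κ1 p.1 T) p.2
      + (2 * κ1 p.1 p.2 + κ2 p.1 p.2) * deriv (fun Y : ℝ => κ1 Y p.2) p.1 = 0)
    (hsys2 : ∀ p ∈ U, deriv (fun T : ℝ => κ2 p.1 T) p.2
      + (κ1 p.1 p.2 + 2 * κ2 p.1 p.2) * deriv (fun Y : ℝ => κ2 Y p.2) p.1 = 0) :
    ∀ p ∈ U,
      deriv (fun T : ℝ => κ1 p.1 T + κ2 p.1 T) p.2
        + deriv (fun Y : ℝ =>
            (κ1 Y p.2) ^ 2 + κ1 Y p.2 * κ2 Y p.2 + (κ2 Y p.2) ^ 2) p.1 = 0 ∧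
      deriv (fun T : ℝ => (κ2 p.1 T - κ1 p.1 T) ^ 3) p.2
        + (3 / 2) * deriv (fun Y : ℝ =>
            (κ1 Y p.2 + κ2 Y p.2) * (κ2 Y p.2 - κ1 Y p.2) ^ 3) p.1 = 0 := by
  intro p hp
  -- differentiability of the partial maps
  have hlineY : DifferentiableAt ℝ (fun Y : ℝ => ((Y, p.2) : ℝ × ℝ)) p.1 :=
    (differentiable_id.prodMk (differentiable_const _)).differentiableAt
  have hlineT : DifferentiableAt ℝ (fun T : ℝ => ((p.1, T) : ℝ × ℝ)) p.2 :=
    ((differentiable_const _).prodMk differentiable_id).differentiableAt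
  have d1Y : DifferentiableAt ℝ (fun Y : ℝ => κ1 Y p.2) p.1 :=
    by have := (h1d p hp).comp p.1 hlineY; exact this
  have d2Y : DifferentiableAt ℝ (fun Y : ℝ => κ2 Y p.2) p.1 :=
    by have := (h2d p hp).comp p.1 hlineY; exact this
  have d1T : DifferentiableAt ℝ (fun T : ℝ => κ1 p.1 T) p.2 :=
    by have := (h1d p hp).comp p.2 hlineT; exact this
  have d2T : DifferentiableAt ℝ (fun T : ℝ => κ2 p.1 T) p.2 :=
    by have := (h2d p hp).comp p.2 hlineT; exact this
  set a := κ1 p.1 p.2 with ha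
  set b := κ2 p.1 p.2 with hb
  set u1 := deriv (fun Y : ℝ => κ1 Y p.2) p.1 with hu1
  set u2 := deriv (fun Y : ℝ => κ2 Y p.2) p.1 with hu2
  set v1 := deriv (fun T : ℝ => κ1 p.1 T) p.2 with hv1
  set v2 := deriv (fun T : ℝ => κ2 p.1 T) p.2 with hv2
  have H1Y : HasDerivAt (fun Y : ℝ => κ1 Y p.2) u1 p.1 := d1Y.hasDerivAt
  have H2Y : HasDerivAt (fun Y : ℝ => κ2 Y p.2) u2 p.1 := d2Y.hasDerivAt
  have H1T : HasDerivAt (fun T : ℝ => κ1 p.1 T) v1 p.2 := d1T.hasDerivAt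
  have H2T : HasDerivAt (fun T : ℝ => κ2 p.1 T) v2 p.2 := d2T.hasDerivAt
  have e1 : v1 + (2 * a + b) * u1 = 0 := hsys1 p hp
  have e2 : v2 + (a + 2 * b) * u2 = 0 := hsys2 p hp
  constructor
  · have hT : deriv (fun T : ℝ => κ1 p.1 T + κ2 p.1 T) p.2 = v1 + v2 :=
      (H1T.add H2T).deriv
    have hY : deriv (fun Y : ℝ =>
        (κ1 Y p.2) ^ 2 + κ1 Y p.2 * κ2 Y p.2 + (κ2 Y p.2) ^ 2) p.1
        = (2 * a * u1) + (u1 * b + a * u2) + (2 * b * u2) := by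
      have := (((H1Y.fun_pow 2).fun_add (H1Y.fun_mul H2Y)).fun_add (H2Y.fun_pow 2)).deriv
      rw [this]; push_cast; ring
    rw [hT, hY]; nlinarith [e1, e2]
  · have hT : deriv (fun T : ℝ => (κ2 p.1 T - κ1 p.1 T) ^ 3) p.2
        = 3 * (b - a) ^ 2 * (v2 - v1) := by
      have := ((H2T.fun_sub H1T).fun_pow 3).deriv
      rw [this]; push_cast; ring
    have hY : deriv (fun Y : ℝ =>
        (κ1 Y p.2 + κ2 Y p.2) * (κ2 Y p.2 - κ1 Y p.2) ^ 3) p.1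
        = (u1 + u2) * (b - a) ^ 3 + (a + b) * (3 * (b - a) ^ 2 * (u2 - u1)) := by
      have := ((H1Y.fun_add H2Y).fun_mul ((H2Y.fun_sub H1Y).fun_pow 3)).deriv
      rw [this]; push_cast; ring
    rw [hT, hY]; nlinarith [e1, e2, sq_nonneg (b - a)]
end
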